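/- Anticommutativity of boundary maps around a 3×3 diagram: Let F_0 and F_1 be additive, homotopy invariant, half-exact covariant functors from C*-algebras to abelian groups, equipped with boundary homomorphisms ∂_0^e : F_0(A2) → F_1(A0) and ∂_1^e : F_1(A2) → F_0(A0) for every short exact sequence e : A0 ↪ A1 ↠ A2, such that (a) the cyclic six-term sequence F_0(A0) → F_0(A1) → F_0(A2) →∂_0^e F_1(A0) → F_1(A1) → F_1(A2) →∂_1^e F_0(A0) is exact at every spot, and (b) the ∂_j are natural: for every morphism (φ0, φ1, φ2) of short exact sequences from e to e′, one has ∂_j^{e′} ∘ F_j(φ2) = F_{1-j}(φ0) ∘ ∂_j^e for j = 0,1. Given a 3×3 commuting diagram of C*-algebras with exact rows e_A : A0 ↪ A1 ↠ A2, e_B : B0 ↪ B1 ↠ B2, e_C : C0 ↪ C1 ↠ C2 and exact columns e_i : A_i ↪ B_i ↠ C_i (i = 0,1,2), the two corner squares anticommute: for j = 0 and j = 1, ∂_{1-j}^{e_A} ∘ ∂_j^{e_2} = − ∂_{1-j}^{e_0} ∘ ∂_j^{e_C} as homomorphisms F_j(C2) → F_{1-j}(A0). -/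

import Mathlib

/-!
Formalization preamble: cones, suspensions, mapping cones of (non-unital) C*-algebras,
their concrete models inside algebras of continuous functions, and functors from
C*-algebras to abelian groups.
-/

set_option maxHeartbeats 1600000
set_option synthInstance.maxHeartbeats 800000

open scoped unitInterval CStarAlgebra

noncomputable section

namespace CStarPaper

variable {A B : Type*} [NonUnitalCStarAlgebra A] [NonUnitalCStarAlgebra B]

/-- The flip of a continuous function on the square `[0,1]²`. -/
def flip2 {A : Type*} [NonUnitalCStarAlgebra A] (f : C(I × I, A)) : C(I × I, A) :=
  f.comp ⟨Prod.swap, continuous_swap⟩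

@[simp] lemma flip2_apply (f : C(I × I, A)) (s t : I) : flip2 f (s, t) = f (t, s) := rfl

/-- The cone `CA = {f ∈ C([0,1],A) : f(0) = 0}` of a C*-algebra `A`. -/
def cone (A : Type*) [NonUnitalCStarAlgebra A] : NonUnitalStarSubalgebra ℂ C(I, A) where
  carrier := {f | f 0 = 0}
  add_mem' := by intro f g hf hg; simp_all [Set.mem_setOf_eq]
  zero_mem' := by simp [Set.mem_setOf_eq]
  mul_mem' := by intro f g hf hg; simp_all [Set.mem_setOf_eq]
  smul_mem' := by intro c f hf; simp_all [Set.mem_setOf_eq]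
  star_mem' := by intro f hf; simp_all [Set.mem_setOf_eq, map_star]

instance cone.isClosed (A : Type*) [NonUnitalCStarAlgebra A] :
    IsClosed ((cone A : Set C(I, A))) :=
  isClosed_eq (continuous_eval_const 0) continuous_const

/-- The suspension `SA = {f ∈ C([0,1],A) : f(0) = f(1) = 0}` of a C*-algebra `A`. -/
def susp (A : Type*) [NonUnitalCStarAlgebra A] : NonUnitalStarSubalgebra ℂ C(I, A) where
  carrier := {f | f 0 = 0 ∧ f 1 = 0}
  add_mem' := by intro f g hf hg; simp_all [Set.mem_setOf_eq]
  zero_mem' := by simp [Set.mem_setOf_eq]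
  mul_mem' := by intro f g hf hg; simp_all [Set.mem_setOf_eq]
  smul_mem' := by intro c f hf; simp_all [Set.mem_setOf_eq]
  star_mem' := by intro f hf; simp_all [Set.mem_setOf_eq, map_star]

instance susp.isClosed (A : Type*) [NonUnitalCStarAlgebra A] :
    IsClosed ((susp A : Set C(I, A))) := by
  have h : (susp A : Set C(I, A)) = {f | f 0 = 0} ∩ {f | f 1 = 0} := rfl
  rw [h]
  exact (isClosed_eq (continuous_eval_const 0) continuous_const).inter
    (isClosed_eq (continuous_eval_const 1) continuous_const)

/-- The mapping cone `C_φ = {(x,y) ∈ A ⊕ CB : φ(x) = y(1)}` of `φ : A → B`. -/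
def mapCone (φ : A →⋆ₙₐ[ℂ] B) : NonUnitalStarSubalgebra ℂ (A × C(I, B)) where
  carrier := {p | p.2 0 = 0 ∧ φ p.1 = p.2 1}
  add_mem' := by intro p q hp hq; simp_all [Set.mem_setOf_eq]
  zero_mem' := by simp [Set.mem_setOf_eq]
  mul_mem' := by intro p q hp hq; simp_all [Set.mem_setOf_eq]
  smul_mem' := by intro c p hp; simp_all [Set.mem_setOf_eq]
  star_mem' := by intro p hp; simp_all [Set.mem_setOf_eq, map_star]

instance mapCone.isClosed (φ : A →⋆ₙₐ[ℂ] B) :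
    IsClosed ((mapCone φ : Set (A × C(I, B)))) := by
  have h : (mapCone φ : Set (A × C(I, B)))
      = {p : A × C(I, B) | p.2 0 = 0} ∩ {p : A × C(I, B) | φ p.1 = p.2 1} := rfl
  rw [h]
  exact (isClosed_eq ((continuous_eval_const 0).comp continuous_snd) continuous_const).inter
    (isClosed_eq ((map_continuous φ).comp continuous_fst)
      ((continuous_eval_const 1).comp continuous_snd))

/-- The canonical inclusion `SA → CA`. -/
def suspIncl (A : Type*) [NonUnitalCStarAlgebra A] : ↥(susp A) →⋆ₙₐ[ℂ] ↥(cone A) where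
  toFun f := ⟨(f : C(I, A)), f.2.1⟩
  map_smul' _ _ := rfl
  map_zero' := rfl
  map_add' _ _ := rfl
  map_mul' _ _ := rfl
  map_star' _ := rfl

/-- Evaluation at `1`, as a *-homomorphism `CA → A`. -/
def coneEval (A : Type*) [NonUnitalCStarAlgebra A] : ↥(cone A) →⋆ₙₐ[ℂ] A where
  toFun f := (f : C(I, A)) 1
  map_smul' _ _ := rfl
  map_zero' := rfl
  map_add' _ _ := rfl
  map_mul' _ _ := rfl
  map_star' _ := rfl

/-- The canonical projection `π_mc : C_φ → A`, `(x,y) ↦ x`. -/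
def mapConeProj (φ : A →⋆ₙₐ[ℂ] B) : ↥(mapCone φ) →⋆ₙₐ[ℂ] A where
  toFun p := (p : A × C(I, B)).1
  map_smul' _ _ := rfl
  map_zero' := rfl
  map_add' _ _ := rfl
  map_mul' _ _ := rfl
  map_star' _ := rfl

/-- The projection `C_φ → CB`, `(x,y) ↦ y`. -/
def mapConeSnd (φ : A →⋆ₙₐ[ℂ] B) : ↥(mapCone φ) →⋆ₙₐ[ℂ] ↥(cone B) where
  toFun p := ⟨(p : A × C(I, B)).2, p.2.1⟩
  map_smul' _ _ := rfl
  map_zero' := rfl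
  map_add' _ _ := rfl
  map_mul' _ _ := rfl
  map_star' _ := rfl

/-- The canonical inclusion `ι_mc : SB → C_φ`, `g ↦ (0,g)`. -/
def mapConeIncl (φ : A →⋆ₙₐ[ℂ] B) : ↥(susp B) →⋆ₙₐ[ℂ] ↥(mapCone φ) where
  toFun g := ⟨(0, (g : C(I, B))), ⟨g.2.1, by simp [g.2.2]⟩⟩
  map_smul' c g := Subtype.ext (by simp [Prod.ext_iff])
  map_zero' := Subtype.ext (by simp [Prod.ext_iff])
  map_add' g h := Subtype.ext (by simp [Prod.ext_iff])
  map_mul' g h := Subtype.ext (by simp [Prod.ext_iff])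
  map_star' g := Subtype.ext (by simp [Prod.ext_iff])

/-- The concrete model of the suspension `S(C_φ)` of a mapping cone, inside
`C([0,1],A) × C([0,1]²,B)`. -/
def suspMapConeModel (φ : A →⋆ₙₐ[ℂ] B) :
    NonUnitalStarSubalgebra ℂ (C(I, A) × C(I × I, B)) where
  carrier := {p | p.1 0 = 0 ∧ p.1 1 = 0 ∧ (∀ t, p.2 (0, t) = 0) ∧ (∀ t, p.2 (1, t) = 0) ∧
    (∀ s, p.2 (s, 0) = 0) ∧ ∀ s, φ (p.1 s) = p.2 (s, 1)}
  add_mem' := by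
    rintro p q ⟨h1, h2, h3, h4, h5, h6⟩ ⟨g1, g2, g3, g4, g5, g6⟩
    exact ⟨by simp [h1, g1], by simp [h2, g2], fun t => by simp [h3 t, g3 t],
      fun t => by simp [h4 t, g4 t], fun s => by simp [h5 s, g5 s],
      fun s => by simp [h6 s, g6 s]⟩
  zero_mem' := ⟨by simp, by simp, fun t => by simp, fun t => by simp, fun s => by simp,
    fun s => by simp⟩
  mul_mem' := by
    rintro p q ⟨h1, h2, h3, h4, h5, h6⟩ ⟨g1, g2, g3, g4, g5, g6⟩
    exact ⟨by simp [h1, g1], by simp [h2, g2], fun t => by simp [h3 t, g3 t],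
      fun t => by simp [h4 t, g4 t], fun s => by simp [h5 s, g5 s],
      fun s => by simp [h6 s, g6 s]⟩
  smul_mem' := by
    rintro c p ⟨h1, h2, h3, h4, h5, h6⟩
    exact ⟨by simp [h1], by simp [h2], fun t => by simp [h3 t],
      fun t => by simp [h4 t], fun s => by simp [h5 s], fun s => by simp [h6 s]⟩
  star_mem' := by
    rintro p ⟨h1, h2, h3, h4, h5, h6⟩
    exact ⟨by simp [h1], by simp [h2], fun t => by simp [h3 t],
      fun t => by simp [h4 t], fun s => by simp [h5 s], fun s => by simp [map_star, h6 s]⟩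

/-- The concrete model of the mapping cone `C_{Sφ}` of the suspension of `φ`, inside
`C([0,1],A) × C([0,1]²,B)`. -/
def mapConeSuspModel (φ : A →⋆ₙₐ[ℂ] B) :
    NonUnitalStarSubalgebra ℂ (C(I, A) × C(I × I, B)) where
  carrier := {p | p.1 0 = 0 ∧ p.1 1 = 0 ∧ (∀ t, p.2 (0, t) = 0) ∧ (∀ s, p.2 (s, 0) = 0) ∧
    (∀ s, p.2 (s, 1) = 0) ∧ ∀ t, φ (p.1 t) = p.2 (1, t)}
  add_mem' := by
    rintro p q ⟨h1, h2, h3, h4, h5, h6⟩ ⟨g1, g2, g3, g4, g5, g6⟩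
    exact ⟨by simp [h1, g1], by simp [h2, g2], fun t => by simp [h3 t, g3 t],
      fun s => by simp [h4 s, g4 s], fun s => by simp [h5 s, g5 s],
      fun t => by simp [h6 t, g6 t]⟩
  zero_mem' := ⟨by simp, by simp, fun t => by simp, fun s => by simp, fun s => by simp,
    fun t => by simp⟩
  mul_mem' := by
    rintro p q ⟨h1, h2, h3, h4, h5, h6⟩ ⟨g1, g2, g3, g4, g5, g6⟩
    exact ⟨by simp [h1, g1], by simp [h2, g2], fun t => by simp [h3 t, g3 t],
      fun s => by simp [h4 s, g4 s], fun s => by simp [h5 s, g5 s],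
      fun t => by simp [h6 t, g6 t]⟩
  smul_mem' := by
    rintro c p ⟨h1, h2, h3, h4, h5, h6⟩
    exact ⟨by simp [h1], by simp [h2], fun t => by simp [h3 t],
      fun s => by simp [h4 s], fun s => by simp [h5 s], fun t => by simp [h6 t]⟩
  star_mem' := by
    rintro p ⟨h1, h2, h3, h4, h5, h6⟩
    exact ⟨by simp [h1], by simp [h2], fun t => by simp [h3 t],
      fun s => by simp [h4 s], fun s => by simp [h5 s], fun t => by simp [map_star, h6 t]⟩

/-- The concrete model of the cone `C(C_φ)` of a mapping cone, inside
`C([0,1],A) × C([0,1]²,B)`. -/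
def coneMapConeModel (φ : A →⋆ₙₐ[ℂ] B) :
    NonUnitalStarSubalgebra ℂ (C(I, A) × C(I × I, B)) where
  carrier := {p | p.1 0 = 0 ∧ (∀ t, p.2 (0, t) = 0) ∧ (∀ s, p.2 (s, 0) = 0) ∧
    ∀ s, φ (p.1 s) = p.2 (s, 1)}
  add_mem' := by
    rintro p q ⟨h1, h3, h5, h6⟩ ⟨g1, g3, g5, g6⟩
    exact ⟨by simp [h1, g1], fun t => by simp [h3 t, g3 t], fun s => by simp [h5 s, g5 s],
      fun s => by simp [h6 s, g6 s]⟩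
  zero_mem' := ⟨by simp, fun t => by simp, fun s => by simp, fun s => by simp⟩
  mul_mem' := by
    rintro p q ⟨h1, h3, h5, h6⟩ ⟨g1, g3, g5, g6⟩
    exact ⟨by simp [h1, g1], fun t => by simp [h3 t, g3 t], fun s => by simp [h5 s, g5 s],
      fun s => by simp [h6 s, g6 s]⟩
  smul_mem' := by
    rintro c p ⟨h1, h3, h5, h6⟩
    exact ⟨by simp [h1], fun t => by simp [h3 t], fun s => by simp [h5 s],
      fun s => by simp [h6 s]⟩
  star_mem' := by
    rintro p ⟨h1, h3, h5, h6⟩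
    exact ⟨by simp [h1], fun t => by simp [h3 t], fun s => by simp [h5 s],
      fun s => by simp [map_star, h6 s]⟩

/-- The concrete model of the mapping cone `C_{Cφ}` of the cone of `φ`, inside
`C([0,1],A) × C([0,1]²,B)`. -/
def mapConeConeModel (φ : A →⋆ₙₐ[ℂ] B) :
    NonUnitalStarSubalgebra ℂ (C(I, A) × C(I × I, B)) where
  carrier := {p | p.1 0 = 0 ∧ (∀ t, p.2 (0, t) = 0) ∧ (∀ s, p.2 (s, 0) = 0) ∧
    ∀ t, φ (p.1 t) = p.2 (1, t)}
  add_mem' := by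
    rintro p q ⟨h1, h3, h5, h6⟩ ⟨g1, g3, g5, g6⟩
    exact ⟨by simp [h1, g1], fun t => by simp [h3 t, g3 t], fun s => by simp [h5 s, g5 s],
      fun t => by simp [h6 t, g6 t]⟩
  zero_mem' := ⟨by simp, fun t => by simp, fun s => by simp, fun t => by simp⟩
  mul_mem' := by
    rintro p q ⟨h1, h3, h5, h6⟩ ⟨g1, g3, g5, g6⟩
    exact ⟨by simp [h1, g1], fun t => by simp [h3 t, g3 t], fun s => by simp [h5 s, g5 s],
      fun t => by simp [h6 t, g6 t]⟩
  smul_mem' := by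
    rintro c p ⟨h1, h3, h5, h6⟩
    exact ⟨by simp [h1], fun t => by simp [h3 t], fun s => by simp [h5 s],
      fun t => by simp [h6 t]⟩
  star_mem' := by
    rintro p ⟨h1, h3, h5, h6⟩
    exact ⟨by simp [h1], fun t => by simp [h3 t], fun s => by simp [h5 s],
      fun t => by simp [map_star, h6 t]⟩

variable {X Y₁ Y₂ Z : Type*} [NonUnitalCStarAlgebra X] [NonUnitalCStarAlgebra Y₁]
  [NonUnitalCStarAlgebra Y₂] [NonUnitalCStarAlgebra Z]

/-- The canonical concrete realization of the double mapping cone associated to a commuting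
square `ψ₁ ∘ φ₁ = ψ₂ ∘ φ₂`, inside `X × C([0,1],Y₁) × C([0,1],Y₂) × C([0,1]²,Z)`. -/
def dblCone (φ₁ : X →⋆ₙₐ[ℂ] Y₁) (φ₂ : X →⋆ₙₐ[ℂ] Y₂) (ψ₁ : Y₁ →⋆ₙₐ[ℂ] Z) (ψ₂ : Y₂ →⋆ₙₐ[ℂ] Z) :
    NonUnitalStarSubalgebra ℂ (X × C(I, Y₁) × C(I, Y₂) × C(I × I, Z)) where
  carrier := {p | p.2.1 0 = 0 ∧ p.2.2.1 0 = 0 ∧ (∀ t, p.2.2.2 (0, t) = 0) ∧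
    (∀ s, p.2.2.2 (s, 0) = 0) ∧ φ₁ p.1 = p.2.1 1 ∧ φ₂ p.1 = p.2.2.1 1 ∧
    (∀ t, ψ₁ (p.2.1 t) = p.2.2.2 (1, t)) ∧ ∀ s, ψ₂ (p.2.2.1 s) = p.2.2.2 (s, 1)}
  add_mem' := by
    rintro p q ⟨h1, h2, h3, h4, h5, h6, h7, h8⟩ ⟨g1, g2, g3, g4, g5, g6, g7, g8⟩
    exact ⟨by simp [h1, g1], by simp [h2, g2], fun t => by simp [h3 t, g3 t],
      fun s => by simp [h4 s, g4 s], by simp [h5, g5], by simp [h6, g6],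
      fun t => by simp [h7 t, g7 t], fun s => by simp [h8 s, g8 s]⟩
  zero_mem' := ⟨by simp, by simp, fun t => by simp, fun s => by simp, by simp, by simp,
    fun t => by simp, fun s => by simp⟩
  mul_mem' := by
    rintro p q ⟨h1, h2, h3, h4, h5, h6, h7, h8⟩ ⟨g1, g2, g3, g4, g5, g6, g7, g8⟩
    exact ⟨by simp [h1, g1], by simp [h2, g2], fun t => by simp [h3 t, g3 t],
      fun s => by simp [h4 s, g4 s], by simp [h5, g5], by simp [h6, g6],
      fun t => by simp [h7 t, g7 t], fun s => by simp [h8 s, g8 s]⟩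
  smul_mem' := by
    rintro c p ⟨h1, h2, h3, h4, h5, h6, h7, h8⟩
    exact ⟨by simp [h1], by simp [h2], fun t => by simp [h3 t], fun s => by simp [h4 s],
      by simp [h5], by simp [h6], fun t => by simp [h7 t], fun s => by simp [h8 s]⟩
  star_mem' := by
    rintro p ⟨h1, h2, h3, h4, h5, h6, h7, h8⟩
    exact ⟨by simp [h1], by simp [h2], fun t => by simp [h3 t], fun s => by simp [h4 s],
      by simp [map_star, h5], by simp [map_star, h6], fun t => by simp [map_star, h7 t],
      fun s => by simp [map_star, h8 s]⟩

/-- The pullback of two *-homomorphisms with common codomain, as a *-subalgebra of the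
direct sum. -/
def pullbackAlg {B₂ C₁ C₂ : Type*} [NonUnitalCStarAlgebra B₂] [NonUnitalCStarAlgebra C₁]
    [NonUnitalCStarAlgebra C₂] (v : B₂ →⋆ₙₐ[ℂ] C₂) (w : C₁ →⋆ₙₐ[ℂ] C₂) :
    NonUnitalStarSubalgebra ℂ (B₂ × C₁) where
  carrier := {p | v p.1 = w p.2}
  add_mem' := by intro p q hp hq; simp_all [Set.mem_setOf_eq]
  zero_mem' := by simp [Set.mem_setOf_eq]
  mul_mem' := by intro p q hp hq; simp_all [Set.mem_setOf_eq]
  smul_mem' := by intro c p hp; simp_all [Set.mem_setOf_eq]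
  star_mem' := by intro p hp; simp_all [Set.mem_setOf_eq, map_star]

/-- `ι, π` form a short exact sequence. -/
def IsShortExact {A₀ A₁ A₂ : Type*}
    [NonUnitalNonAssocSemiring A₀] [NonUnitalNonAssocSemiring A₁] [NonUnitalNonAssocSemiring A₂]
    [DistribMulAction ℂ A₀] [DistribMulAction ℂ A₁] [DistribMulAction ℂ A₂]
    [Star A₀] [Star A₁] [Star A₂]
    (ι : A₀ →⋆ₙₐ[ℂ] A₁) (π : A₁ →⋆ₙₐ[ℂ] A₂) : Prop :=
  Function.Injective ι ∧ Function.Surjective π ∧ Set.range ι = {b | π b = 0}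

/-- A covariant functor from (non-unital) C*-algebras to abelian groups. -/
structure AbFunctor where
  obj : (A : Type) → [NonUnitalCStarAlgebra A] → Type
  grp : (A : Type) → [NonUnitalCStarAlgebra A] → AddCommGroup (obj A)
  map : {A B : Type} → [NonUnitalCStarAlgebra A] → [NonUnitalCStarAlgebra B] →
    (A →⋆ₙₐ[ℂ] B) → obj A → obj B
  map_add : ∀ {A B : Type} [NonUnitalCStarAlgebra A] [NonUnitalCStarAlgebra B]
    (φ : A →⋆ₙₐ[ℂ] B) (x y : obj A),
      letI := grp A
      letI := grp B
      map φ (x + y) = map φ x + map φ y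
  map_id : ∀ {A : Type} [NonUnitalCStarAlgebra A] (φ : A →⋆ₙₐ[ℂ] A),
    (∀ a, φ a = a) → ∀ x, map φ x = x
  map_comp : ∀ {A B C : Type} [NonUnitalCStarAlgebra A] [NonUnitalCStarAlgebra B]
    [NonUnitalCStarAlgebra C] (φ : A →⋆ₙₐ[ℂ] B) (ψ : B →⋆ₙₐ[ℂ] C) (x : obj A),
      map (ψ.comp φ) x = map ψ (map φ x)

attribute [instance] AbFunctor.grp

/-- The first coordinate projection as a *-homomorphism. -/
def fstHom (A B : Type*) [NonUnitalCStarAlgebra A] [NonUnitalCStarAlgebra B] :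
    (A × B) →⋆ₙₐ[ℂ] A where
  toFun := Prod.fst
  map_smul' _ _ := rfl
  map_zero' := rfl
  map_add' _ _ := rfl
  map_mul' _ _ := rfl
  map_star' _ := rfl

/-- The second coordinate projection as a *-homomorphism. -/
def sndHom (A B : Type*) [NonUnitalCStarAlgebra A] [NonUnitalCStarAlgebra B] :
    (A × B) →⋆ₙₐ[ℂ] B where
  toFun := Prod.snd
  map_smul' _ _ := rfl
  map_zero' := rfl
  map_add' _ _ := rfl
  map_mul' _ _ := rfl
  map_star' _ := rfl

/-- Additivity: `F(A ⊕ B) ≅ F(A) × F(B)` via the coordinate projections. -/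
def AbFunctor.Additive (F : AbFunctor) : Prop :=
  ∀ (A B : Type) [NonUnitalCStarAlgebra A] [NonUnitalCStarAlgebra B],
    Function.Bijective fun x : F.obj (A × B) => (F.map (fstHom A B) x, F.map (sndHom A B) x)

/-- Homotopy invariance. -/
def AbFunctor.HomotopyInvariant (F : AbFunctor) : Prop :=
  ∀ (A B : Type) [NonUnitalCStarAlgebra A] [NonUnitalCStarAlgebra B] (φ ψ : A →⋆ₙₐ[ℂ] B),
    (∃ Φ : A →⋆ₙₐ[ℂ] C(I, B), (∀ a, Φ a 0 = φ a) ∧ (∀ a, Φ a 1 = ψ a)) →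
    ∀ x, F.map φ x = F.map ψ x

/-- Half-exactness. -/
def AbFunctor.HalfExact (F : AbFunctor) : Prop :=
  ∀ (A₀ A₁ A₂ : Type) [NonUnitalCStarAlgebra A₀] [NonUnitalCStarAlgebra A₁]
    [NonUnitalCStarAlgebra A₂] (ι : A₀ →⋆ₙₐ[ℂ] A₁) (π : A₁ →⋆ₙₐ[ℂ] A₂),
    IsShortExact ι π → ∀ y : F.obj A₁, (∃ x, F.map ι x = y) ↔ F.map π y = 0

/-!
The corner algebra `P = {(b, c, a) ∈ B₁ ⊕ C₀ ⊕ A₂ | v₁ b = ιC c, πB b = u₂ a}` sits in two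
extensions: `P ↪ B₁ ↠ C₂`, which maps to `e₂` and to `e_C`, and `A₀ ↪ P ↠ C₀ ⊕ A₂`, into which
`e₀` and `e_A` map. Let `x ∈ F_{1-j}(P)` be the boundary of `z ∈ F_j(C₂)` in the first extension;
by naturality its images in `F_{1-j}(A₂)` and `F_{1-j}(C₀)` are `∂^{e₂} z` and `∂^{e_C} z`. The
image of `x` in `F_{1-j}(C₀ ⊕ A₂)` comes from `F_{1-j}(P)`, so its boundary in the second
extension vanishes; splitting it by additivity and using naturality once more, that boundary is
`∂^{e₀} ∂^{e_C} z + ∂^{e_A} ∂^{e₂} z`.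
-/

theorem IsShortExact.apply_apply_eq_zero {K E Q : Type*} [NonUnitalCStarAlgebra K]
    [NonUnitalCStarAlgebra E] [NonUnitalCStarAlgebra Q] {ι : K →⋆ₙₐ[ℂ] E} {π : E →⋆ₙₐ[ℂ] Q}
    (h : IsShortExact ι π) (a : K) : π (ι a) = 0 :=
  h.2.2.subset (Set.mem_range_self a)

theorem IsShortExact.exists_apply_eq {K E Q : Type*} [NonUnitalCStarAlgebra K]
    [NonUnitalCStarAlgebra E] [NonUnitalCStarAlgebra Q] {ι : K →⋆ₙₐ[ℂ] E} {π : E →⋆ₙₐ[ℂ] Q}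
    (h : IsShortExact ι π) {b : E} (hb : π b = 0) : ∃ a, ι a = b :=
  h.2.2.superset hb

namespace AbFunctor

variable (F : AbFunctor) {X Y : Type} [NonUnitalCStarAlgebra X] [NonUnitalCStarAlgebra Y]

theorem map_zero (φ : X →⋆ₙₐ[ℂ] Y) : F.map φ 0 = 0 := by
  have h := F.map_add φ 0 0
  rw [add_zero] at h
  exact left_eq_add.mp h

theorem subsingleton_obj (hF : F.Additive) (Z : Type) [NonUnitalCStarAlgebra Z]
    [Subsingleton Z] : Subsingleton (F.obj Z) := by
  refine ⟨fun a b => ?_⟩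
  obtain ⟨x, hx⟩ := (hF Z Z).2 (a, b)
  have hfst : fstHom Z Z = sndHom Z Z := NonUnitalStarAlgHom.ext fun _ => Subsingleton.elim _ _
  simp only [hfst, Prod.mk.injEq] at hx
  exact hx.1.symm.trans hx.2

theorem map_eq_zero_of_forall_eq_zero (hF : F.Additive) {φ : X →⋆ₙₐ[ℂ] Y}
    (hφ : ∀ a, φ a = 0) (x : F.obj X) : F.map φ x = 0 := by
  have := F.subsingleton_obj hF (Fin 0 → ℂ)
  have hφ' : φ = (0 : (Fin 0 → ℂ) →⋆ₙₐ[ℂ] Y).comp 0 := NonUnitalStarAlgHom.ext hφ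
  rw [hφ', F.map_comp, Subsingleton.elim (F.map 0 x) 0, F.map_zero]

theorem eq_map_inl_add_map_inr (hF : F.Additive) (y : F.obj (X × Y)) :
    y = F.map (NonUnitalStarAlgHom.inl ℂ X Y) (F.map (fstHom X Y) y) +
      F.map (NonUnitalStarAlgHom.inr ℂ X Y) (F.map (sndHom X Y) y) := by
  let inl := NonUnitalStarAlgHom.inl ℂ X Y
  let inr := NonUnitalStarAlgHom.inr ℂ X Y
  refine (hF X Y).1 (Prod.ext ?_ ?_) <;> dsimp only <;> rw [F.map_add]
  · rw [← F.map_comp inl, ← F.map_comp inr, F.map_id ((fstHom X Y).comp inl) (fun _ => rfl),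
      F.map_eq_zero_of_forall_eq_zero hF (φ := (fstHom X Y).comp inr) (fun _ => rfl), add_zero]
  · rw [← F.map_comp inl, ← F.map_comp inr, F.map_id ((sndHom X Y).comp inr) (fun _ => rfl),
      F.map_eq_zero_of_forall_eq_zero hF (φ := (sndHom X Y).comp inl) (fun _ => rfl), zero_add]

end AbFunctor

abbrev BoundaryMap (F G : AbFunctor) : Type 1 :=
  ∀ {A B C : Type} [NonUnitalCStarAlgebra A] [NonUnitalCStarAlgebra B]
    [NonUnitalCStarAlgebra C] (ι : A →⋆ₙₐ[ℂ] B) (π : B →⋆ₙₐ[ℂ] C),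
    IsShortExact ι π → F.obj C → G.obj A

namespace BoundaryMap

variable {F G : AbFunctor} (d : BoundaryMap F G)

def IsAdditive : Prop :=
  ∀ {A B C : Type} [NonUnitalCStarAlgebra A] [NonUnitalCStarAlgebra B]
    [NonUnitalCStarAlgebra C] (ι : A →⋆ₙₐ[ℂ] B) (π : B →⋆ₙₐ[ℂ] C) (h : IsShortExact ι π)
    (z w : F.obj C), d ι π h (z + w) = d ι π h z + d ι π h w

def IsZeroOnImage : Prop :=
  ∀ {A B C : Type} [NonUnitalCStarAlgebra A] [NonUnitalCStarAlgebra B]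
    [NonUnitalCStarAlgebra C] (ι : A →⋆ₙₐ[ℂ] B) (π : B →⋆ₙₐ[ℂ] C) (h : IsShortExact ι π)
    (y : F.obj B), d ι π h (F.map π y) = 0

def IsNatural : Prop :=
  ∀ {A B C A' B' C' : Type} [NonUnitalCStarAlgebra A] [NonUnitalCStarAlgebra B]
    [NonUnitalCStarAlgebra C] [NonUnitalCStarAlgebra A'] [NonUnitalCStarAlgebra B']
    [NonUnitalCStarAlgebra C'] (ι : A →⋆ₙₐ[ℂ] B) (π : B →⋆ₙₐ[ℂ] C) (h : IsShortExact ι π)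
    (ι' : A' →⋆ₙₐ[ℂ] B') (π' : B' →⋆ₙₐ[ℂ] C') (h' : IsShortExact ι' π')
    (φ₀ : A →⋆ₙₐ[ℂ] A') (φ₁ : B →⋆ₙₐ[ℂ] B') (φ₂ : C →⋆ₙₐ[ℂ] C'),
    (∀ x, φ₁ (ι x) = ι' (φ₀ x)) → (∀ y, φ₂ (π y) = π' (φ₁ y)) →
    ∀ z, d ι' π' h' (F.map φ₂ z) = G.map φ₀ (d ι π h z)

variable {d} {A B C A' B' C' : Type} [NonUnitalCStarAlgebra A] [NonUnitalCStarAlgebra B]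
  [NonUnitalCStarAlgebra C] [NonUnitalCStarAlgebra A'] [NonUnitalCStarAlgebra B']
  [NonUnitalCStarAlgebra C']

theorem IsNatural.apply_eq_map (hd : d.IsNatural) {ι : A →⋆ₙₐ[ℂ] B} {π : B →⋆ₙₐ[ℂ] C}
    (h : IsShortExact ι π) {ι' : A' →⋆ₙₐ[ℂ] B'} {π' : B' →⋆ₙₐ[ℂ] C} (h' : IsShortExact ι' π')
    {φ₀ : A →⋆ₙₐ[ℂ] A'} {φ₁ : B →⋆ₙₐ[ℂ] B'} (h₁ : ∀ x, φ₁ (ι x) = ι' (φ₀ x))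
    (h₂ : ∀ y, π y = π' (φ₁ y)) (z : F.obj C) :
    d ι' π' h' z = G.map φ₀ (d ι π h z) := by
  have := hd ι π h ι' π' h' φ₀ φ₁ (NonUnitalStarAlgHom.id ℂ C) h₁ h₂ z
  rwa [F.map_id _ fun _ => rfl] at this

theorem IsNatural.apply_map_eq (hd : d.IsNatural) {ι : A →⋆ₙₐ[ℂ] B} {π : B →⋆ₙₐ[ℂ] C}
    (h : IsShortExact ι π) {ι' : A →⋆ₙₐ[ℂ] B'} {π' : B' →⋆ₙₐ[ℂ] C'} (h' : IsShortExact ι' π')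
    {φ₁ : B →⋆ₙₐ[ℂ] B'} {φ₂ : C →⋆ₙₐ[ℂ] C'} (h₁ : ∀ x, φ₁ (ι x) = ι' x)
    (h₂ : ∀ y, φ₂ (π y) = π' (φ₁ y)) (z : F.obj C) :
    d ι' π' h' (F.map φ₂ z) = d ι π h z := by
  have := hd ι π h ι' π' h' (NonUnitalStarAlgHom.id ℂ A) φ₁ φ₂ h₁ h₂ z
  rwa [G.map_id _ fun _ => rfl] at this

end BoundaryMap

theorem BoundaryMap.IsNatural.apply_map_fst_add_apply_map_snd_eq_zero {F G : AbFunctor}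
    {d : BoundaryMap F G} (hd : d.IsNatural) (hF : F.Additive) (hadd : d.IsAdditive)
    (hzero : d.IsZeroOnImage) {K P X Y X₁ Y₁ : Type} [NonUnitalCStarAlgebra K]
    [NonUnitalCStarAlgebra P] [NonUnitalCStarAlgebra X] [NonUnitalCStarAlgebra Y]
    [NonUnitalCStarAlgebra X₁] [NonUnitalCStarAlgebra Y₁]
    {κ : K →⋆ₙₐ[ℂ] P} {ρ : P →⋆ₙₐ[ℂ] X × Y} (hκρ : IsShortExact κ ρ)
    {ιX : K →⋆ₙₐ[ℂ] X₁} {πX : X₁ →⋆ₙₐ[ℂ] X} (hX : IsShortExact ιX πX)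
    {ιY : K →⋆ₙₐ[ℂ] Y₁} {πY : Y₁ →⋆ₙₐ[ℂ] Y} (hY : IsShortExact ιY πY)
    {α : X₁ →⋆ₙₐ[ℂ] P} (hα₁ : ∀ k, α (ιX k) = κ k) (hα₂ : ∀ x, ρ (α x) = (πX x, 0))
    {γ : Y₁ →⋆ₙₐ[ℂ] P} (hγ₁ : ∀ k, γ (ιY k) = κ k) (hγ₂ : ∀ y, ρ (γ y) = (0, πY y))
    (x : F.obj P) :
    d ιX πX hX (F.map ((fstHom X Y).comp ρ) x) + d ιY πY hY (F.map ((sndHom X Y).comp ρ) x)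
      = 0 := by
  have hX' := hd.apply_map_eq hX hκρ hα₁ (φ₂ := NonUnitalStarAlgHom.inl ℂ X Y)
    (fun x => (hα₂ x).symm) (F.map (fstHom X Y) (F.map ρ x))
  have hY' := hd.apply_map_eq hY hκρ hγ₁ (φ₂ := NonUnitalStarAlgHom.inr ℂ X Y)
    (fun y => (hγ₂ y).symm) (F.map (sndHom X Y) (F.map ρ x))
  rw [F.map_comp, F.map_comp, ← hX', ← hY', ← hadd, ← F.eq_map_inl_add_map_inr hF]
  exact hzero κ ρ hκρ x

section Pullback

variable {X Y Z W : Type*} [NonUnitalCStarAlgebra X] [NonUnitalCStarAlgebra Y]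
  [NonUnitalCStarAlgebra Z] [NonUnitalCStarAlgebra W] (v : X →⋆ₙₐ[ℂ] Z) (w : Y →⋆ₙₐ[ℂ] Z)

instance pullbackAlg.isClosed : IsClosed (pullbackAlg v w : Set (X × Y)) :=
  isClosed_eq ((map_continuous v).comp continuous_fst) ((map_continuous w).comp continuous_snd)

def pullbackAlg.fst : pullbackAlg v w →⋆ₙₐ[ℂ] X :=
  (NonUnitalStarAlgHom.fst ℂ X Y).comp (NonUnitalStarSubalgebraClass.subtype _)

def pullbackAlg.snd : pullbackAlg v w →⋆ₙₐ[ℂ] Y :=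
  (NonUnitalStarAlgHom.snd ℂ X Y).comp (NonUnitalStarSubalgebraClass.subtype _)

def pullbackAlg.lift (f : W →⋆ₙₐ[ℂ] X) (g : W →⋆ₙₐ[ℂ] Y) (h : ∀ a, v (f a) = w (g a)) :
    W →⋆ₙₐ[ℂ] pullbackAlg v w :=
  NonUnitalStarAlgHom.codRestrict (f.prod g) _ h

end Pullback

def _root_.NonUnitalStarAlgHom.prodMap {X Y Z W : Type*} [NonUnitalCStarAlgebra X]
    [NonUnitalCStarAlgebra Y] [NonUnitalCStarAlgebra Z] [NonUnitalCStarAlgebra W]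
    (f : X →⋆ₙₐ[ℂ] Z) (g : Y →⋆ₙₐ[ℂ] W) : X × Y →⋆ₙₐ[ℂ] Z × W :=
  (f.comp (NonUnitalStarAlgHom.fst ℂ X Y)).prod (g.comp (NonUnitalStarAlgHom.snd ℂ X Y))

@[simp]
theorem _root_.NonUnitalStarAlgHom.prodMap_apply {X Y Z W : Type*} [NonUnitalCStarAlgebra X]
    [NonUnitalCStarAlgebra Y] [NonUnitalCStarAlgebra Z] [NonUnitalCStarAlgebra W]
    (f : X →⋆ₙₐ[ℂ] Z) (g : Y →⋆ₙₐ[ℂ] W) (p : X × Y) : f.prodMap g p = (f p.1, g p.2) :=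
  rfl

section Corner

variable {A₀ A₁ A₂ B₀ B₁ B₂ C₀ C₁ C₂ : Type*}
  [NonUnitalCStarAlgebra A₀] [NonUnitalCStarAlgebra A₁] [NonUnitalCStarAlgebra A₂]
  [NonUnitalCStarAlgebra B₀] [NonUnitalCStarAlgebra B₁] [NonUnitalCStarAlgebra B₂]
  [NonUnitalCStarAlgebra C₀] [NonUnitalCStarAlgebra C₁] [NonUnitalCStarAlgebra C₂]

abbrev corner (v₁ : B₁ →⋆ₙₐ[ℂ] C₁) (πB : B₁ →⋆ₙₐ[ℂ] B₂) (ιC : C₀ →⋆ₙₐ[ℂ] C₁)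
    (u₂ : A₂ →⋆ₙₐ[ℂ] B₂) : NonUnitalStarSubalgebra ℂ (B₁ × C₀ × A₂) :=
  pullbackAlg (v₁.prod πB) (ιC.prodMap u₂)

variable {ιA : A₀ →⋆ₙₐ[ℂ] A₁} {πA : A₁ →⋆ₙₐ[ℂ] A₂} {ιB : B₀ →⋆ₙₐ[ℂ] B₁}
  {πB : B₁ →⋆ₙₐ[ℂ] B₂} {ιC : C₀ →⋆ₙₐ[ℂ] C₁} {πC : C₁ →⋆ₙₐ[ℂ] C₂} {u₀ : A₀ →⋆ₙₐ[ℂ] B₀}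
  {u₁ : A₁ →⋆ₙₐ[ℂ] B₁} {v₁ : B₁ →⋆ₙₐ[ℂ] C₁} {u₂ : A₂ →⋆ₙₐ[ℂ] B₂} {v₂ : B₂ →⋆ₙₐ[ℂ] C₂}

theorem mem_corner {p : B₁ × C₀ × A₂} :
    p ∈ corner v₁ πB ιC u₂ ↔ v₁ p.1 = ιC p.2.1 ∧ πB p.1 = u₂ p.2.2 :=
  Prod.ext_iff

theorem isShortExact_corner_fst (hC : IsShortExact ιC πC) (h₂ : IsShortExact u₂ v₂)
    (hπB : Function.Surjective πB) (hsq₄ : ∀ q, v₂ (πB q) = πC (v₁ q)) :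
    IsShortExact (pullbackAlg.fst (v₁.prod πB) (ιC.prodMap u₂)) (v₂.comp πB) := by
  refine ⟨fun p q hpq => ?_, fun c => ?_, Set.ext fun b => ⟨?_, fun hb => ?_⟩⟩
  · obtain ⟨hpC, hpA⟩ := mem_corner.mp p.2
    obtain ⟨hqC, hqA⟩ := mem_corner.mp q.2
    have h1 : (p : B₁ × C₀ × A₂).1 = (q : B₁ × C₀ × A₂).1 := hpq
    refine Subtype.ext (Prod.ext h1 (Prod.ext (hC.1 ?_) (h₂.1 ?_)))
    · rw [← hpC, ← hqC, h1]
    · rw [← hpA, ← hqA, h1]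
  · obtain ⟨b₂, rfl⟩ := h₂.2.1 c
    obtain ⟨b₁, rfl⟩ := hπB b₂
    exact ⟨b₁, rfl⟩
  · rintro ⟨p, rfl⟩
    show v₂ (πB (p : B₁ × C₀ × A₂).1) = 0
    rw [(mem_corner.mp p.2).2]
    exact h₂.apply_apply_eq_zero _
  · have hb : v₂ (πB b) = 0 := hb
    obtain ⟨a, ha⟩ := h₂.exists_apply_eq hb
    obtain ⟨c, hc⟩ := hC.exists_apply_eq ((hsq₄ b).symm.trans hb)
    exact ⟨⟨(b, c, a), mem_corner.mpr ⟨hc.symm, ha.symm⟩⟩, rfl⟩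

theorem isShortExact_corner_snd (hA : IsShortExact ιA πA) (hιB : Function.Injective ιB)
    (hu₀ : Function.Injective u₀) (h₁ : IsShortExact u₁ v₁) (h₂ : IsShortExact u₂ v₂)
    (hC : IsShortExact ιC πC) (hsq₁ : ∀ p, u₁ (ιA p) = ιB (u₀ p))
    (hsq₂ : ∀ p, u₂ (πA p) = πB (u₁ p)) (hsq₄ : ∀ q, v₂ (πB q) = πC (v₁ q))
    {κ : A₀ →⋆ₙₐ[ℂ] corner v₁ πB ιC u₂} (hκ : ∀ a, (κ a : B₁ × C₀ × A₂) = (ιB (u₀ a), 0)) :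
    IsShortExact κ (pullbackAlg.snd (v₁.prod πB) (ιC.prodMap u₂)) := by
  refine ⟨fun a a' haa => ?_, fun ⟨c₀, a₂⟩ => ?_, Set.ext fun p => ⟨?_, fun hp => ?_⟩⟩
  · have h := congrArg Subtype.val haa
    rw [hκ, hκ] at h
    exact hu₀ (hιB (Prod.ext_iff.mp h).1)
  · obtain ⟨b, hb⟩ := h₁.2.1 (ιC c₀)
    obtain ⟨a', ha'⟩ := h₂.exists_apply_eq (b := πB b)
      (by rw [hsq₄, hb, hC.apply_apply_eq_zero])
    obtain ⟨x, hx⟩ := hA.2.1 (a₂ - a')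
    refine ⟨⟨(b + u₁ x, c₀, a₂), mem_corner.mpr ⟨?_, ?_⟩⟩, rfl⟩
    · rw [map_add, h₁.apply_apply_eq_zero, add_zero, hb]
    · rw [map_add, ← hsq₂, hx, ← ha', ← map_add, add_sub_cancel]
  · rintro ⟨a, rfl⟩
    exact congrArg Prod.snd (hκ a)
  · obtain ⟨⟨b, c, a⟩, hmem⟩ := p
    obtain ⟨rfl, rfl⟩ : c = 0 ∧ a = 0 := Prod.ext_iff.mp hp
    obtain ⟨hbC, hbA⟩ := mem_corner.mp hmem
    simp only [map_zero] at hbC hbA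
    obtain ⟨a₁, rfl⟩ := h₁.exists_apply_eq hbC
    obtain ⟨a₀, rfl⟩ := hA.exists_apply_eq (h₂.1 (by rw [hsq₂, hbA, map_zero] :
      u₂ (πA a₁) = u₂ 0))
    exact ⟨a₀, Subtype.ext ((hκ a₀).trans (by rw [← hsq₁]; rfl))⟩

end Corner

theorem boundary_comp_boundary_eq_neg {F G : AbFunctor} (hG : G.Additive)
    {d : BoundaryMap F G} {d' : BoundaryMap G F} (hd : d.IsNatural) (hd' : d'.IsNatural)
    (hd'add : d'.IsAdditive) (hd'zero : d'.IsZeroOnImage)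
    {A₀ A₁ A₂ B₀ B₁ B₂ C₀ C₁ C₂ : Type}
    [NonUnitalCStarAlgebra A₀] [NonUnitalCStarAlgebra A₁] [NonUnitalCStarAlgebra A₂]
    [NonUnitalCStarAlgebra B₀] [NonUnitalCStarAlgebra B₁] [NonUnitalCStarAlgebra B₂]
    [NonUnitalCStarAlgebra C₀] [NonUnitalCStarAlgebra C₁] [NonUnitalCStarAlgebra C₂]
    {ιA : A₀ →⋆ₙₐ[ℂ] A₁} {πA : A₁ →⋆ₙₐ[ℂ] A₂} (hA : IsShortExact ιA πA)
    {ιB : B₀ →⋆ₙₐ[ℂ] B₁} {πB : B₁ →⋆ₙₐ[ℂ] B₂} (hB : IsShortExact ιB πB)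
    {ιC : C₀ →⋆ₙₐ[ℂ] C₁} {πC : C₁ →⋆ₙₐ[ℂ] C₂} (hC : IsShortExact ιC πC)
    {u₀ : A₀ →⋆ₙₐ[ℂ] B₀} {v₀ : B₀ →⋆ₙₐ[ℂ] C₀} (h₀ : IsShortExact u₀ v₀)
    {u₁ : A₁ →⋆ₙₐ[ℂ] B₁} {v₁ : B₁ →⋆ₙₐ[ℂ] C₁} (h₁ : IsShortExact u₁ v₁)
    {u₂ : A₂ →⋆ₙₐ[ℂ] B₂} {v₂ : B₂ →⋆ₙₐ[ℂ] C₂} (h₂ : IsShortExact u₂ v₂)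
    (hsq₁ : ∀ p, u₁ (ιA p) = ιB (u₀ p)) (hsq₂ : ∀ p, u₂ (πA p) = πB (u₁ p))
    (hsq₃ : ∀ q, v₁ (ιB q) = ιC (v₀ q)) (hsq₄ : ∀ q, v₂ (πB q) = πC (v₁ q)) (z : F.obj C₂) :
    d' ιA πA hA (d u₂ v₂ h₂ z) = - d' u₀ v₀ h₀ (d ιC πC hC z) := by
  let κ : A₀ →⋆ₙₐ[ℂ] corner v₁ πB ιC u₂ := pullbackAlg.lift _ _ (ιB.comp u₀) 0 fun a =>
    Prod.ext (by simp [hsq₃, h₀.apply_apply_eq_zero]) (by simp [hB.apply_apply_eq_zero])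
  let jB : B₀ →⋆ₙₐ[ℂ] corner v₁ πB ιC u₂ :=
    pullbackAlg.lift _ _ ιB ((NonUnitalStarAlgHom.inl ℂ C₀ A₂).comp v₀) fun b =>
      Prod.ext (by simp [hsq₃]) (by simp [hB.apply_apply_eq_zero])
  let jA : A₁ →⋆ₙₐ[ℂ] corner v₁ πB ιC u₂ :=
    pullbackAlg.lift _ _ u₁ ((NonUnitalStarAlgHom.inr ℂ C₀ A₂).comp πA) fun a =>
      Prod.ext (by simp [h₁.apply_apply_eq_zero]) (by simp [hsq₂])
  have hP := isShortExact_corner_fst hC h₂ hB.2.1 hsq₄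
  have hκρ := isShortExact_corner_snd hA hB.1 h₀.1 h₁ h₂ hC hsq₁ hsq₂ hsq₄ (κ := κ)
    fun _ => rfl
  let ρ := pullbackAlg.snd (v₁.prod πB) (ιC.prodMap u₂)
  have hxA := hd.apply_eq_map hP h₂ (φ₀ := (sndHom C₀ A₂).comp ρ) (φ₁ := πB)
    (fun p => (mem_corner.mp p.2).2) (fun _ => rfl) z
  have hxC := hd.apply_eq_map hP hC (φ₀ := (fstHom C₀ A₂).comp ρ) (φ₁ := v₁)
    (fun p => (mem_corner.mp p.2).1) hsq₄ z
  have hsum := hd'.apply_map_fst_add_apply_map_snd_eq_zero hG hd'add hd'zero hκρ h₀ hA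
    (α := jB) (fun a => Subtype.ext (Prod.ext rfl (Prod.ext (h₀.apply_apply_eq_zero a) rfl)))
    (fun _ => rfl)
    (γ := jA) (fun a => Subtype.ext (Prod.ext (hsq₁ a) (Prod.ext rfl (hA.apply_apply_eq_zero a))))
    (fun _ => rfl) (d _ _ hP z)
  rw [hxA, hxC]
  exact eq_neg_of_add_eq_zero_right hsum

theorem statement6_general (F₀ F₁ : AbFunctor)
    (hAdd₀ : F₀.Additive)
    (hAdd₁ : F₁.Additive)
    -- boundary maps assigned to every short exact sequence
    (d₀ : ∀ {A B C : Type} [NonUnitalCStarAlgebra A] [NonUnitalCStarAlgebra B]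
      [NonUnitalCStarAlgebra C] (ι : A →⋆ₙₐ[ℂ] B) (π : B →⋆ₙₐ[ℂ] C),
      IsShortExact ι π → F₀.obj C → F₁.obj A)
    (d₁ : ∀ {A B C : Type} [NonUnitalCStarAlgebra A] [NonUnitalCStarAlgebra B]
      [NonUnitalCStarAlgebra C] (ι : A →⋆ₙₐ[ℂ] B) (π : B →⋆ₙₐ[ℂ] C),
      IsShortExact ι π → F₁.obj C → F₀.obj A)
    -- the boundary maps are additive
    (hd₀add : ∀ {A B C : Type} [NonUnitalCStarAlgebra A] [NonUnitalCStarAlgebra B]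
      [NonUnitalCStarAlgebra C] (ι : A →⋆ₙₐ[ℂ] B) (π : B →⋆ₙₐ[ℂ] C) (h : IsShortExact ι π)
      (z w : F₀.obj C), d₀ ι π h (z + w) = d₀ ι π h z + d₀ ι π h w)
    (hd₁add : ∀ {A B C : Type} [NonUnitalCStarAlgebra A] [NonUnitalCStarAlgebra B]
      [NonUnitalCStarAlgebra C] (ι : A →⋆ₙₐ[ℂ] B) (π : B →⋆ₙₐ[ℂ] C) (h : IsShortExact ι π)
      (z w : F₁.obj C), d₁ ι π h (z + w) = d₁ ι π h z + d₁ ι π h w)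
    -- (a) the cyclic six-term sequence is exact at every spot
    (hex₂ : ∀ {A B C : Type} [NonUnitalCStarAlgebra A] [NonUnitalCStarAlgebra B]
      [NonUnitalCStarAlgebra C] (ι : A →⋆ₙₐ[ℂ] B) (π : B →⋆ₙₐ[ℂ] C) (h : IsShortExact ι π)
      (z : F₀.obj C), (∃ y, F₀.map π y = z) ↔ d₀ ι π h z = 0)
    (hex₅ : ∀ {A B C : Type} [NonUnitalCStarAlgebra A] [NonUnitalCStarAlgebra B]
      [NonUnitalCStarAlgebra C] (ι : A →⋆ₙₐ[ℂ] B) (π : B →⋆ₙₐ[ℂ] C) (h : IsShortExact ι π)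
      (z : F₁.obj C), (∃ y, F₁.map π y = z) ↔ d₁ ι π h z = 0)
    -- (b) naturality of the boundary maps
    (hnat₀ : ∀ {A B C A' B' C' : Type} [NonUnitalCStarAlgebra A] [NonUnitalCStarAlgebra B]
      [NonUnitalCStarAlgebra C] [NonUnitalCStarAlgebra A'] [NonUnitalCStarAlgebra B']
      [NonUnitalCStarAlgebra C'] (ι : A →⋆ₙₐ[ℂ] B) (π : B →⋆ₙₐ[ℂ] C) (h : IsShortExact ι π)
      (ι' : A' →⋆ₙₐ[ℂ] B') (π' : B' →⋆ₙₐ[ℂ] C') (h' : IsShortExact ι' π')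
      (φ₀ : A →⋆ₙₐ[ℂ] A') (φ₁ : B →⋆ₙₐ[ℂ] B') (φ₂ : C →⋆ₙₐ[ℂ] C'),
      (∀ x, φ₁ (ι x) = ι' (φ₀ x)) → (∀ y, φ₂ (π y) = π' (φ₁ y)) →
      ∀ z, d₀ ι' π' h' (F₀.map φ₂ z) = F₁.map φ₀ (d₀ ι π h z))
    (hnat₁ : ∀ {A B C A' B' C' : Type} [NonUnitalCStarAlgebra A] [NonUnitalCStarAlgebra B]
      [NonUnitalCStarAlgebra C] [NonUnitalCStarAlgebra A'] [NonUnitalCStarAlgebra B']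
      [NonUnitalCStarAlgebra C'] (ι : A →⋆ₙₐ[ℂ] B) (π : B →⋆ₙₐ[ℂ] C) (h : IsShortExact ι π)
      (ι' : A' →⋆ₙₐ[ℂ] B') (π' : B' →⋆ₙₐ[ℂ] C') (h' : IsShortExact ι' π')
      (φ₀ : A →⋆ₙₐ[ℂ] A') (φ₁ : B →⋆ₙₐ[ℂ] B') (φ₂ : C →⋆ₙₐ[ℂ] C'),
      (∀ x, φ₁ (ι x) = ι' (φ₀ x)) → (∀ y, φ₂ (π y) = π' (φ₁ y)) →
      ∀ z, d₁ ι' π' h' (F₁.map φ₂ z) = F₀.map φ₀ (d₁ ι π h z))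
    -- the 3×3 diagram
    {A₀ A₁ A₂ B₀ B₁ B₂ C₀ C₁ C₂ : Type}
    [NonUnitalCStarAlgebra A₀] [NonUnitalCStarAlgebra A₁] [NonUnitalCStarAlgebra A₂]
    [NonUnitalCStarAlgebra B₀] [NonUnitalCStarAlgebra B₁] [NonUnitalCStarAlgebra B₂]
    [NonUnitalCStarAlgebra C₀] [NonUnitalCStarAlgebra C₁] [NonUnitalCStarAlgebra C₂]
    (ιA : A₀ →⋆ₙₐ[ℂ] A₁) (πA : A₁ →⋆ₙₐ[ℂ] A₂) (hA : IsShortExact ιA πA)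
    (ιB : B₀ →⋆ₙₐ[ℂ] B₁) (πB : B₁ →⋆ₙₐ[ℂ] B₂) (hB : IsShortExact ιB πB)
    (ιC : C₀ →⋆ₙₐ[ℂ] C₁) (πC : C₁ →⋆ₙₐ[ℂ] C₂) (hC : IsShortExact ιC πC)
    (u₀ : A₀ →⋆ₙₐ[ℂ] B₀) (v₀ : B₀ →⋆ₙₐ[ℂ] C₀) (h₀ : IsShortExact u₀ v₀)
    (u₁ : A₁ →⋆ₙₐ[ℂ] B₁) (v₁ : B₁ →⋆ₙₐ[ℂ] C₁) (h₁ : IsShortExact u₁ v₁)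
    (u₂ : A₂ →⋆ₙₐ[ℂ] B₂) (v₂ : B₂ →⋆ₙₐ[ℂ] C₂) (h₂ : IsShortExact u₂ v₂)
    (hsq₁ : ∀ p, u₁ (ιA p) = ιB (u₀ p)) (hsq₂ : ∀ p, u₂ (πA p) = πB (u₁ p))
    (hsq₃ : ∀ q, v₁ (ιB q) = ιC (v₀ q)) (hsq₄ : ∀ q, v₂ (πB q) = πC (v₁ q)) :
    -- the two corner squares anticommute
    (∀ z : F₀.obj C₂, d₁ ιA πA hA (d₀ u₂ v₂ h₂ z) = - d₁ u₀ v₀ h₀ (d₀ ιC πC hC z)) ∧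
    ∀ z : F₁.obj C₂, d₀ ιA πA hA (d₁ u₂ v₂ h₂ z) = - d₀ u₀ v₀ h₀ (d₁ ιC πC hC z) := by
  have hzero₀ : BoundaryMap.IsZeroOnImage @d₀ := fun ι π h y => (hex₂ ι π h _).mp ⟨y, rfl⟩
  have hzero₁ : BoundaryMap.IsZeroOnImage @d₁ := fun ι π h y => (hex₅ ι π h _).mp ⟨y, rfl⟩
  exact ⟨boundary_comp_boundary_eq_neg hAdd₁ @hnat₀ @hnat₁ @hd₁add hzero₁
      hA hB hC h₀ h₁ h₂ hsq₁ hsq₂ hsq₃ hsq₄,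
    boundary_comp_boundary_eq_neg hAdd₀ @hnat₁ @hnat₀ @hd₀add hzero₀
      hA hB hC h₀ h₁ h₂ hsq₁ hsq₂ hsq₃ hsq₄⟩

/-- Anticommutativity of the boundary maps around a 3×3 diagram. -/
theorem statement6 (F₀ F₁ : AbFunctor)
    (hAdd₀ : F₀.Additive) (hHtpy₀ : F₀.HomotopyInvariant) (hHX₀ : F₀.HalfExact)
    (hAdd₁ : F₁.Additive) (hHtpy₁ : F₁.HomotopyInvariant) (hHX₁ : F₁.HalfExact)
    -- boundary maps assigned to every short exact sequence
    (d₀ : ∀ {A B C : Type} [NonUnitalCStarAlgebra A] [NonUnitalCStarAlgebra B]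
      [NonUnitalCStarAlgebra C] (ι : A →⋆ₙₐ[ℂ] B) (π : B →⋆ₙₐ[ℂ] C),
      IsShortExact ι π → F₀.obj C → F₁.obj A)
    (d₁ : ∀ {A B C : Type} [NonUnitalCStarAlgebra A] [NonUnitalCStarAlgebra B]
      [NonUnitalCStarAlgebra C] (ι : A →⋆ₙₐ[ℂ] B) (π : B →⋆ₙₐ[ℂ] C),
      IsShortExact ι π → F₁.obj C → F₀.obj A)
    -- the boundary maps are additive
    (hd₀add : ∀ {A B C : Type} [NonUnitalCStarAlgebra A] [NonUnitalCStarAlgebra B]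
      [NonUnitalCStarAlgebra C] (ι : A →⋆ₙₐ[ℂ] B) (π : B →⋆ₙₐ[ℂ] C) (h : IsShortExact ι π)
      (z w : F₀.obj C), d₀ ι π h (z + w) = d₀ ι π h z + d₀ ι π h w)
    (hd₁add : ∀ {A B C : Type} [NonUnitalCStarAlgebra A] [NonUnitalCStarAlgebra B]
      [NonUnitalCStarAlgebra C] (ι : A →⋆ₙₐ[ℂ] B) (π : B →⋆ₙₐ[ℂ] C) (h : IsShortExact ι π)
      (z w : F₁.obj C), d₁ ι π h (z + w) = d₁ ι π h z + d₁ ι π h w)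
    -- (a) the cyclic six-term sequence is exact at every spot
    (hex₁ : ∀ {A B C : Type} [NonUnitalCStarAlgebra A] [NonUnitalCStarAlgebra B]
      [NonUnitalCStarAlgebra C] (ι : A →⋆ₙₐ[ℂ] B) (π : B →⋆ₙₐ[ℂ] C) (h : IsShortExact ι π)
      (y : F₀.obj B), (∃ x, F₀.map ι x = y) ↔ F₀.map π y = 0)
    (hex₂ : ∀ {A B C : Type} [NonUnitalCStarAlgebra A] [NonUnitalCStarAlgebra B]
      [NonUnitalCStarAlgebra C] (ι : A →⋆ₙₐ[ℂ] B) (π : B →⋆ₙₐ[ℂ] C) (h : IsShortExact ι π)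
      (z : F₀.obj C), (∃ y, F₀.map π y = z) ↔ d₀ ι π h z = 0)
    (hex₃ : ∀ {A B C : Type} [NonUnitalCStarAlgebra A] [NonUnitalCStarAlgebra B]
      [NonUnitalCStarAlgebra C] (ι : A →⋆ₙₐ[ℂ] B) (π : B →⋆ₙₐ[ℂ] C) (h : IsShortExact ι π)
      (x : F₁.obj A), (∃ z, d₀ ι π h z = x) ↔ F₁.map ι x = 0)
    (hex₄ : ∀ {A B C : Type} [NonUnitalCStarAlgebra A] [NonUnitalCStarAlgebra B]
      [NonUnitalCStarAlgebra C] (ι : A →⋆ₙₐ[ℂ] B) (π : B →⋆ₙₐ[ℂ] C) (h : IsShortExact ι π)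
      (y : F₁.obj B), (∃ x, F₁.map ι x = y) ↔ F₁.map π y = 0)
    (hex₅ : ∀ {A B C : Type} [NonUnitalCStarAlgebra A] [NonUnitalCStarAlgebra B]
      [NonUnitalCStarAlgebra C] (ι : A →⋆ₙₐ[ℂ] B) (π : B →⋆ₙₐ[ℂ] C) (h : IsShortExact ι π)
      (z : F₁.obj C), (∃ y, F₁.map π y = z) ↔ d₁ ι π h z = 0)
    (hex₆ : ∀ {A B C : Type} [NonUnitalCStarAlgebra A] [NonUnitalCStarAlgebra B]
      [NonUnitalCStarAlgebra C] (ι : A →⋆ₙₐ[ℂ] B) (π : B →⋆ₙₐ[ℂ] C) (h : IsShortExact ι π)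
      (x : F₀.obj A), (∃ z, d₁ ι π h z = x) ↔ F₀.map ι x = 0)
    -- (b) naturality of the boundary maps
    (hnat₀ : ∀ {A B C A' B' C' : Type} [NonUnitalCStarAlgebra A] [NonUnitalCStarAlgebra B]
      [NonUnitalCStarAlgebra C] [NonUnitalCStarAlgebra A'] [NonUnitalCStarAlgebra B']
      [NonUnitalCStarAlgebra C'] (ι : A →⋆ₙₐ[ℂ] B) (π : B →⋆ₙₐ[ℂ] C) (h : IsShortExact ι π)
      (ι' : A' →⋆ₙₐ[ℂ] B') (π' : B' →⋆ₙₐ[ℂ] C') (h' : IsShortExact ι' π')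
      (φ₀ : A →⋆ₙₐ[ℂ] A') (φ₁ : B →⋆ₙₐ[ℂ] B') (φ₂ : C →⋆ₙₐ[ℂ] C'),
      (∀ x, φ₁ (ι x) = ι' (φ₀ x)) → (∀ y, φ₂ (π y) = π' (φ₁ y)) →
      ∀ z, d₀ ι' π' h' (F₀.map φ₂ z) = F₁.map φ₀ (d₀ ι π h z))
    (hnat₁ : ∀ {A B C A' B' C' : Type} [NonUnitalCStarAlgebra A] [NonUnitalCStarAlgebra B]
      [NonUnitalCStarAlgebra C] [NonUnitalCStarAlgebra A'] [NonUnitalCStarAlgebra B']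
      [NonUnitalCStarAlgebra C'] (ι : A →⋆ₙₐ[ℂ] B) (π : B →⋆ₙₐ[ℂ] C) (h : IsShortExact ι π)
      (ι' : A' →⋆ₙₐ[ℂ] B') (π' : B' →⋆ₙₐ[ℂ] C') (h' : IsShortExact ι' π')
      (φ₀ : A →⋆ₙₐ[ℂ] A') (φ₁ : B →⋆ₙₐ[ℂ] B') (φ₂ : C →⋆ₙₐ[ℂ] C'),
      (∀ x, φ₁ (ι x) = ι' (φ₀ x)) → (∀ y, φ₂ (π y) = π' (φ₁ y)) →
      ∀ z, d₁ ι' π' h' (F₁.map φ₂ z) = F₀.map φ₀ (d₁ ι π h z))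
    -- the 3×3 diagram
    {A₀ A₁ A₂ B₀ B₁ B₂ C₀ C₁ C₂ : Type}
    [NonUnitalCStarAlgebra A₀] [NonUnitalCStarAlgebra A₁] [NonUnitalCStarAlgebra A₂]
    [NonUnitalCStarAlgebra B₀] [NonUnitalCStarAlgebra B₁] [NonUnitalCStarAlgebra B₂]
    [NonUnitalCStarAlgebra C₀] [NonUnitalCStarAlgebra C₁] [NonUnitalCStarAlgebra C₂]
    (ιA : A₀ →⋆ₙₐ[ℂ] A₁) (πA : A₁ →⋆ₙₐ[ℂ] A₂) (hA : IsShortExact ιA πA)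
    (ιB : B₀ →⋆ₙₐ[ℂ] B₁) (πB : B₁ →⋆ₙₐ[ℂ] B₂) (hB : IsShortExact ιB πB)
    (ιC : C₀ →⋆ₙₐ[ℂ] C₁) (πC : C₁ →⋆ₙₐ[ℂ] C₂) (hC : IsShortExact ιC πC)
    (u₀ : A₀ →⋆ₙₐ[ℂ] B₀) (v₀ : B₀ →⋆ₙₐ[ℂ] C₀) (h₀ : IsShortExact u₀ v₀)
    (u₁ : A₁ →⋆ₙₐ[ℂ] B₁) (v₁ : B₁ →⋆ₙₐ[ℂ] C₁) (h₁ : IsShortExact u₁ v₁)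
    (u₂ : A₂ →⋆ₙₐ[ℂ] B₂) (v₂ : B₂ →⋆ₙₐ[ℂ] C₂) (h₂ : IsShortExact u₂ v₂)
    (hsq₁ : ∀ p, u₁ (ιA p) = ιB (u₀ p)) (hsq₂ : ∀ p, u₂ (πA p) = πB (u₁ p))
    (hsq₃ : ∀ q, v₁ (ιB q) = ιC (v₀ q)) (hsq₄ : ∀ q, v₂ (πB q) = πC (v₁ q)) :
    -- the two corner squares anticommute
    (∀ z : F₀.obj C₂, d₁ ιA πA hA (d₀ u₂ v₂ h₂ z) = - d₁ u₀ v₀ h₀ (d₀ ιC πC hC z)) ∧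
    ∀ z : F₁.obj C₂, d₀ ιA πA hA (d₁ u₂ v₂ h₂ z) = - d₀ u₀ v₀ h₀ (d₁ ιC πC hC z) :=
  statement6_general F₀ F₁ hAdd₀ hAdd₁ d₀ d₁ hd₀add hd₁add hex₂ hex₅ hnat₀ hnat₁ ιA πA hA ιB πB hB
    ιC πC hC u₀ v₀ h₀ u₁ v₁ h₁ u₂ v₂ h₂ hsq₁ hsq₂ hsq₃ hsq₄

end CStarPaper
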